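/- arXiv:2001.05774 — 4 statements merged into one kernel-verified Lean document; each statement's English description precedes it below -/
import Mathlib

section
/- Let φ: ℝ → ℝ be compactly supported, twice continuously differentiable, and exact up to degree 2 (∑_j j^m φ(t−j) = t^m for m=0,1,2). Define ψ(t,p) := ∑_{j∈ℤ} φ''(t−j)·(j−p)_+^{1/2}. Then there exists C > 0 such that |ψ(t,p)| ≤ C·(t−p)^{−3/2} for all t, p with t − p ≥ 1. -/
/-!
Write `Φ = φ''` and let `R` bound the support of `φ`. Differentiating the exactness relations
twice gives the discrete moments `∑ j ^ m Φ (t - j) = 0, 0, 2` for `m = 0, 1, 2`, and only the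
`j` with `|t - j| ≤ R` contribute. For `d = t - p ≥ R` expand `√(j - p) = √(d + (j - t))` to
second order in `j - t`: the moments kill the constant and linear terms and turn the quadratic
one into `-1 / (4 d ^ (3/2))`, while the remainder is `O(d ^ (-5/2))`. For `1 ≤ d ≤ R` the
finite sum is bounded outright.
-/

open Finset

theorem Finset.abs_sum_le_card_mul {ι : Type*} {s : Finset ι} {f : ι → ℝ} {B : ℝ}
    (h : ∀ i ∈ s, |f i| ≤ B) : |∑ i ∈ s, f i| ≤ #s * B :=
  (abs_sum_le_sum_abs f s).trans <| by simpa using sum_le_card_nsmul s (|f ·|) B h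

theorem HasCompactSupport.exists_eq_zero_of_lt_abs {E : Type*} [Zero E] {f : ℝ → E}
    (hf : HasCompactSupport f) : ∃ R, 0 ≤ R ∧ ∀ x, R < |x| → f x = 0 := by
  obtain ⟨r, hr⟩ := hf.isBounded.subset_closedBall 0
  refine ⟨max r 0, le_max_right _ _, fun x hx => image_eq_zero_of_notMem_tsupport fun hx' => ?_⟩
  have : |x| ≤ r := by simpa using hr hx'
  exact ((le_max_left r 0).trans_lt hx).not_ge this

theorem iteratedDeriv_eq_zero_of_lt_abs {f : ℝ → ℝ} {R : ℝ} (hf : ∀ x, R < |x| → f x = 0)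
    (n : ℕ) {x : ℝ} (hx : R < |x|) : iteratedDeriv n f x = 0 := by
  have hloc : f =ᶠ[nhds x] fun _ => 0 :=
    Filter.eventually_of_mem ((isOpen_lt continuous_const continuous_abs).mem_nhds hx) hf
  simp [hloc.iteratedDeriv_eq]

noncomputable def window (t R : ℝ) : Finset ℤ := Icc ⌈t - R⌉ ⌊t + R⌋

theorem mem_window {t R : ℝ} {j : ℤ} : j ∈ window t R ↔ |t - j| ≤ R := by
  rw [window, mem_Icc, Int.ceil_le, Int.le_floor, abs_sub_le_iff]
  constructor <;> rintro ⟨h₁, h₂⟩ <;> constructor <;> linarith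

theorem card_window_le {t R : ℝ} (hR : 0 ≤ R) : (#(window t R) : ℝ) ≤ 2 * R + 1 := by
  have hcard : (#(window t R) : ℤ) = max (⌊t + R⌋ + 1 - ⌈t - R⌉) 0 := by
    rw [window, Int.card_Icc, Int.toNat_eq_max]
  have hfloor := Int.floor_le (t + R)
  have hceil := Int.le_ceil (t - R)
  rw [← Int.cast_natCast, hcard, Int.cast_max]
  push_cast
  exact max_le (by linarith) (by linarith)

theorem tsum_eq_sum_window {M : Type*} [AddCommMonoid M] [TopologicalSpace M] {F : ℤ → M}
    {t R : ℝ} (hF : ∀ j : ℤ, R < |t - j| → F j = 0) : ∑' j, F j = ∑ j ∈ window t R, F j :=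
  tsum_eq_sum fun j hj => hF j (not_le.1 (mt mem_window.2 hj))

theorem tsum_mul_iteratedDeriv_comp_sub {φ P : ℝ → ℝ} {R : ℝ} {n : ℕ} (hφ : ContDiff ℝ n φ)
    (hR : ∀ x, R < |x| → φ x = 0) (c : ℤ → ℝ) (hP : ∀ t, ∑' j : ℤ, c j * φ (t - j) = P t)
    (t : ℝ) : ∑' j : ℤ, c j * iteratedDeriv n φ (t - j) = iteratedDeriv n P t := by
  -- near `t` the series is one fixed finite sum, which can be differentiated termwise
  have hloc : (fun s => ∑ j ∈ window t (R + 1), c j * φ (s - j)) =ᶠ[nhds t] P := by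
    filter_upwards [Metric.ball_mem_nhds t one_pos] with s hs
    rw [← hP s, tsum_eq_sum_window fun j hj => ?_]
    rw [Metric.mem_ball, Real.dist_eq] at hs
    have hshift := abs_sub_abs_le_abs_sub (t - j) (s - j)
    rw [show t - j - (s - j) = -(s - t) by ring, abs_neg] at hshift
    rw [hR _ (by linarith), mul_zero]
  rw [tsum_eq_sum_window (R := R + 1) fun j hj => by
      rw [iteratedDeriv_eq_zero_of_lt_abs hR n (by linarith), mul_zero],
    ← hloc.iteratedDeriv_eq, iteratedDeriv_fun_sum fun j _ => by fun_prop]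
  simp [iteratedDeriv_comp_sub_const]

theorem abs_sub_sqrt_taylor_le {s v : ℝ} (hs : 0 < s) (hv : 0 ≤ v) :
    |v - (s + (v ^ 2 - s ^ 2) / (2 * s) - (v ^ 2 - s ^ 2) ^ 2 / (8 * s ^ 3))|
      ≤ 3 / 8 * |v ^ 2 - s ^ 2| ^ 3 / s ^ 5 := by
  -- the exact remainder of the second-order Taylor expansion of `√` at `s ^ 2`
  have hremainder : v - (s + (v ^ 2 - s ^ 2) / (2 * s) - (v ^ 2 - s ^ 2) ^ 2 / (8 * s ^ 3))
      = (v ^ 2 - s ^ 2) ^ 3 * (v + 3 * s) / (8 * s ^ 3 * (v + s) ^ 3) := by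
    field_simp
    ring
  have hfactor : (v + 3 * s) * s ^ 2 ≤ 3 * (v + s) ^ 3 := by
    nlinarith [mul_nonneg hv hs.le, pow_nonneg hv 3, sq_nonneg v]
  rw [hremainder, abs_div, abs_mul, abs_pow, abs_of_pos (by positivity : 0 < v + 3 * s),
    abs_of_pos (by positivity : 0 < 8 * s ^ 3 * (v + s) ^ 3),
    div_le_div_iff₀ (by positivity) (by positivity)]
  calc |v ^ 2 - s ^ 2| ^ 3 * (v + 3 * s) * s ^ 5
      = |v ^ 2 - s ^ 2| ^ 3 * s ^ 3 * ((v + 3 * s) * s ^ 2) := by ring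
    _ ≤ |v ^ 2 - s ^ 2| ^ 3 * s ^ 3 * (3 * (v + s) ^ 3) := by gcongr
    _ = 3 / 8 * |v ^ 2 - s ^ 2| ^ 3 * (8 * s ^ 3 * (v + s) ^ 3) := by ring

theorem sum_mul_quadratic {W : Finset ℤ} {w : ℤ → ℝ} (h₀ : ∑ j ∈ W, w j = 0)
    (h₁ : ∑ j ∈ W, (j : ℝ) * w j = 0) (h₂ : ∑ j ∈ W, (j : ℝ) ^ 2 * w j = 2) (t a b c : ℝ) :
    ∑ j ∈ W, w j * (a + b * (j - t) + c * (j - t) ^ 2) = 2 * c := by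
  have hexpand : ∀ j ∈ W, w j * (a + b * (j - t) + c * (j - t) ^ 2)
      = (a - b * t + c * t ^ 2) * w j + (b - 2 * c * t) * ((j : ℝ) * w j)
        + c * ((j : ℝ) ^ 2 * w j) := fun j _ => by ring
  rw [sum_congr rfl hexpand, sum_add_distrib, sum_add_distrib, ← mul_sum, ← mul_sum, ← mul_sum,
    h₀, h₁, h₂]
  ring

section

variable {W : Finset ℤ} {w : ℤ → ℝ} {t p L M : ℝ}

theorem abs_sum_mul_sqrt_le_of_sub_le (hw : ∀ j ∈ W, |w j| ≤ M) (hW : ∀ j ∈ W, |t - j| ≤ L)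
    (hd : 1 ≤ t - p) (hdL : t - p ≤ L) :
    |∑ j ∈ W, w j * √(max ((j : ℝ) - p) 0)| ≤ 2 * #W * M * L ^ 3 / √(t - p) ^ 3 := by
  have hL : 1 ≤ L := hd.trans hdL
  have hs : 1 ≤ √(t - p) := Real.one_le_sqrt.2 hd
  have hs3 : √(t - p) ^ 3 ≤ L ^ 2 := calc
    √(t - p) ^ 3 ≤ √(t - p) ^ 4 := pow_le_pow_right₀ hs (by norm_num)
    _ = (t - p) ^ 2 := by rw [show 4 = 2 * 2 by rfl, pow_mul, Real.sq_sqrt (by linarith)]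
    _ ≤ L ^ 2 := by gcongr
  rw [le_div_iff₀ (by positivity)]
  have hsum : |∑ j ∈ W, w j * √(max ((j : ℝ) - p) 0)| ≤ #W * (M * (2 * L)) := by
    refine abs_sum_le_card_mul fun j hj => ?_
    rw [abs_mul, abs_of_nonneg (Real.sqrt_nonneg _)]
    refine mul_le_mul (hw j hj) ?_ (Real.sqrt_nonneg _) ((abs_nonneg _).trans (hw j hj))
    refine Real.sqrt_le_iff.2 ⟨by linarith, max_le ?_ (by nlinarith)⟩
    have := (abs_sub_le_iff.1 (hW j hj)).2
    nlinarith
  calc |∑ j ∈ W, w j * √(max ((j : ℝ) - p) 0)| * √(t - p) ^ 3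
      ≤ #W * (M * (2 * L)) * L ^ 2 :=
        mul_le_mul hsum hs3 (by positivity) ((abs_nonneg _).trans hsum)
    _ = 2 * #W * M * L ^ 3 := by ring

theorem abs_sum_mul_sqrt_le_of_le_sub (h₀ : ∑ j ∈ W, w j = 0)
    (h₁ : ∑ j ∈ W, (j : ℝ) * w j = 0) (h₂ : ∑ j ∈ W, (j : ℝ) ^ 2 * w j = 2)
    (hw : ∀ j ∈ W, |w j| ≤ M) (hW : ∀ j ∈ W, |t - j| ≤ L) (hd : 1 ≤ t - p) (hLd : L ≤ t - p) :
    |∑ j ∈ W, w j * √(max ((j : ℝ) - p) 0)|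
      ≤ (1 / 4 + 3 / 8 * #W * M * L ^ 3) / √(t - p) ^ 3 := by
  set s := √(t - p)
  have hs : 1 ≤ s := Real.one_le_sqrt.2 hd
  have hs2 : s ^ 2 = t - p := Real.sq_sqrt (by linarith)
  have hsqrt : ∀ j ∈ W, √(max ((j : ℝ) - p) 0) = √(s ^ 2 + (j - t)) := fun j hj => by
    have := (abs_sub_le_iff.1 (hW j hj)).1
    rw [hs2, max_eq_left (by linarith)]
    congr 1
    ring
  -- second-order Taylor polynomial of `u ↦ √(s ^ 2 + u)` at `u = j - t`
  set q : ℤ → ℝ := fun j => s + 1 / (2 * s) * (j - t) + -1 / (8 * s ^ 3) * (j - t) ^ 2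
  have hsplit : ∑ j ∈ W, w j * √(max ((j : ℝ) - p) 0)
      = ∑ j ∈ W, w j * q j + ∑ j ∈ W, w j * (√(s ^ 2 + (j - t)) - q j) := by
    rw [← sum_add_distrib]
    exact sum_congr rfl fun j hj => by rw [hsqrt j hj]; ring
  have hmain : ∑ j ∈ W, w j * q j = -1 / (4 * s ^ 3) := by
    rw [sum_mul_quadratic h₀ h₁ h₂]
    ring
  have herror : |∑ j ∈ W, w j * (√(s ^ 2 + (j - t)) - q j)| ≤
      #W * (M * (3 / 8 * L ^ 3 / s ^ 5)) := by
    refine abs_sum_le_card_mul fun j hj => ?_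
    have hu := hW j hj
    have hv : (√(s ^ 2 + (j - t))) ^ 2 - s ^ 2 = j - t := by
      rw [Real.sq_sqrt (by linarith [(abs_sub_le_iff.1 hu).1])]
      ring
    have htaylor :=
      abs_sub_sqrt_taylor_le (by positivity : 0 < s) (Real.sqrt_nonneg (s ^ 2 + (j - t)))
    rw [hv] at htaylor
    rw [abs_mul]
    refine mul_le_mul (hw j hj) (htaylor.trans_eq' ?_ |>.trans ?_) (abs_nonneg _)
      ((abs_nonneg _).trans (hw j hj))
    · congr 1
      ring
    · rw [abs_sub_comm] at hu
      gcongr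
  rw [mul_div_assoc', mul_div_assoc', ← mul_assoc, show (#W : ℝ) * M * (3 / 8 * L ^ 3)
    = 3 / 8 * #W * M * L ^ 3 by ring] at herror
  have hX : 0 ≤ 3 / 8 * #W * M * L ^ 3 := by
    have h := (abs_nonneg _).trans herror
    rwa [le_div_iff₀ (by positivity), zero_mul] at h
  calc |∑ j ∈ W, w j * √(max ((j : ℝ) - p) 0)|
      ≤ 1 / (4 * s ^ 3) + 3 / 8 * #W * M * L ^ 3 / s ^ 5 := by
        rw [hsplit, hmain]
        refine (abs_add_le _ _).trans (add_le_add (le_of_eq ?_) herror)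
        rw [neg_div, abs_neg, abs_of_pos (by positivity)]
    _ ≤ 1 / (4 * s ^ 3) + 3 / 8 * #W * M * L ^ 3 / s ^ 3 := by
        gcongr 1 / (4 * s ^ 3) + ?_
        exact div_le_div_of_nonneg_left hX (by positivity) (pow_le_pow_right₀ hs (by norm_num))
    _ = (1 / 4 + 3 / 8 * #W * M * L ^ 3) / s ^ 3 := by ring

end

theorem rpow_neg_three_div_two {x : ℝ} (hx : 0 ≤ x) : x ^ (-(3 : ℝ) / 2) = (√x ^ 3)⁻¹ := by
  rw [Real.sqrt_eq_rpow, ← Real.rpow_natCast, ← Real.rpow_mul hx, ← Real.rpow_neg hx]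
  norm_num

/-- Decay estimate `|ψ(t,p)| ≤ C (t-p)^{-3/2}` for `t - p ≥ 1`, when `φ` is C²,
compactly supported, and exact up to degree 2. -/
theorem stmt_3 (φ : ℝ → ℝ) (hsupp : HasCompactSupport φ) (hsm : ContDiff ℝ 2 φ)
    (hexact : ∀ m : ℕ, m ≤ 2 → ∀ t : ℝ, ∑' j : ℤ, (j : ℝ) ^ m * φ (t - j) = t ^ m)
    (ψ : ℝ → ℝ → ℝ)
    (hψ : ∀ t p : ℝ, ψ t p =
      ∑' j : ℤ, iteratedDeriv 2 φ (t - j) * Real.sqrt (max ((j : ℝ) - p) 0)) :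
    ∃ C : ℝ, 0 < C ∧ ∀ t p : ℝ, 1 ≤ t - p → |ψ t p| ≤ C * (t - p) ^ (-(3:ℝ)/2) := by
  obtain ⟨R, hR, hφR⟩ := hsupp.exists_eq_zero_of_lt_abs
  set Φ := iteratedDeriv 2 φ
  have hΦR : ∀ x, R < |x| → Φ x = 0 := fun x => iteratedDeriv_eq_zero_of_lt_abs hφR 2
  obtain ⟨M, hM⟩ := (HasCompactSupport.intro (isCompact_closedBall (0 : ℝ) R) fun x hx =>
    hΦR x (by simpa using hx)).exists_bound_of_continuous (hsm.continuous_iteratedDeriv 2 le_rfl)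
  simp only [Real.norm_eq_abs] at hM
  have hM0 : 0 ≤ M := (abs_nonneg _).trans (hM 0)
  have hmoment (m : ℕ) (hm : m ≤ 2) (t : ℝ) :
      ∑ j ∈ window t R, (j : ℝ) ^ m * Φ (t - j) = m.descFactorial 2 * t ^ (m - 2) := by
    rw [← tsum_eq_sum_window fun j hj => by rw [hΦR _ hj, mul_zero],
      tsum_mul_iteratedDeriv_comp_sub hsm hφR _ (hexact m hm), iteratedDeriv_pow]
  have hK : 0 ≤ 2 * (2 * R + 1) * M * R ^ 3 := by positivity
  refine ⟨1 / 4 + 2 * (2 * R + 1) * M * R ^ 3, by linarith, fun t p hd => ?_⟩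
  have hwindow (j : ℤ) (hj : j ∈ window t R) : |t - j| ≤ R := mem_window.1 hj
  have hcard : (#(window t R) : ℝ) * M * R ^ 3 ≤ (2 * R + 1) * M * R ^ 3 := by
    gcongr
    exact card_window_le hR
  rw [hψ, tsum_eq_sum_window fun j hj => by rw [hΦR _ hj, zero_mul],
    rpow_neg_three_div_two (by linarith), ← div_eq_mul_inv]
  rcases le_total (t - p) R with hdR | hRd
  · refine (abs_sum_mul_sqrt_le_of_sub_le (fun j _ => hM _) hwindow hd hdR).trans ?_
    gcongr
    linarith
  · refine (abs_sum_mul_sqrt_le_of_le_sub (by simpa using hmoment 0 (by norm_num) t)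
      (by simpa using hmoment 1 (by norm_num) t) (by simpa using hmoment 2 le_rfl t)
      (fun j _ => hM _) hwindow hd hRd).trans ?_
    gcongr ?_ / _
    linarith
end

section
/- For a compactly supported continuously differentiable function φ: ℝ → ℝ, one has lim_{A→∞} [ ∫_{−∞}^{A²} φ'(h+r)·( log((A²−r)^{1/2} + A) − (1/2)log|r| ) dr ] = (1/2) · p.v. ∫_ℝ φ(h+r)/r dr, for every h ∈ ℝ, where the last integral is the principal value. -/
/-!
Integrating by parts on `{|r| > δ}` turns `∫ φ(h+r)/r dr` into
`(φ(h-δ) - φ(h+δ)) log δ - ∫_{|r|>δ} φ'(h+r) log|r| dr`. The boundary term is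
`O(δ log δ)` because `φ` is Lipschitz, and `log|r|` is locally integrable, so the principal
value is `-∫ φ'(h+r) log|r| dr`.

On the other side, `log(√(A²-r) + A) = log(2A) + o(1)` boundedly on the support of `φ'(h+·)`,
and the divergent part `log(2A) ∫ φ'` vanishes since `∫ φ' = 0`; dominated convergence leaves
`-½ ∫ φ'(h+r) log|r| dr`.
-/

open MeasureTheory Filter Set Topology

theorem Real.locallyIntegrable_log : LocallyIntegrable Real.log := by
  refine locallyIntegrable_iff.2 fun K hK => ?_
  have hsub := hK.isBounded.subset_Icc_sInf_sSup
  exact ((intervalIntegrable_iff' (μ := volume)).1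
    intervalIntegral.intervalIntegrable_log').mono_set (hsub.trans Icc_subset_uIcc)

theorem integrableOn_div_of_le_abs {g : ℝ → ℝ} (hg : Integrable g) {δ : ℝ} (hδ : 0 < δ) :
    IntegrableOn (fun r => g r / r) {r | δ ≤ |r|} := by
  refine (hg.norm.div_const δ).integrableOn.mono'
    (hg.aemeasurable.div measurable_id.aemeasurable).aestronglyMeasurable.restrict
    (ae_restrict_of_forall_mem (measurableSet_le measurable_const measurable_abs) fun r hr => ?_)
  rw [norm_div, Real.norm_eq_abs r]
  exact div_le_div_of_nonneg_left (norm_nonneg _) hδ hr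

theorem tendsto_setIntegral_lt_abs {g : ℝ → ℝ} (hg : Integrable g) :
    Tendsto (fun δ => ∫ r in {r | δ < |r|}, g r) (𝓝[>] 0) (𝓝 (∫ r, g r)) := by
  have hmeas : ∀ δ : ℝ, MeasurableSet {r : ℝ | δ < |r|} := fun δ =>
    measurableSet_lt measurable_const measurable_abs
  simp_rw [← integral_indicator (hmeas _)]
  refine tendsto_integral_filter_of_dominated_convergence (fun r => ‖g r‖)
    (.of_forall fun δ => hg.aestronglyMeasurable.indicator (hmeas δ))
    (.of_forall fun δ => .of_forall fun r => norm_indicator_le_norm_self g r) hg.norm ?_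
  filter_upwards [Measure.ae_ne volume 0] with r hr
  refine tendsto_const_nhds.congr' ?_
  filter_upwards [Ioo_mem_nhdsGT (abs_pos.2 hr)] with δ hδ
  exact (indicator_of_mem (show r ∈ {r : ℝ | δ < |r|} from hδ.2) g).symm

theorem LipschitzWith.tendsto_sub_mul_log {f : ℝ → ℝ} {C : NNReal} (hf : LipschitzWith C f) :
    Tendsto (fun δ => (f (-δ) - f δ) * Real.log δ) (𝓝 0) (𝓝 0) := by
  have hδlog : Tendsto (fun δ => 2 * C * |δ * Real.log δ|) (𝓝 0) (𝓝 0) := by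
    simpa using ((Real.continuous_mul_log.tendsto 0).abs.const_mul (2 * C : ℝ))
  refine squeeze_zero_norm (fun δ => ?_) hδlog
  have hlip : |f (-δ) - f δ| ≤ C * |(-δ) - δ| := by
    simpa [Real.dist_eq] using hf.dist_le_mul (-δ) δ
  rw [show (-δ) - δ = -(2 * δ) by ring, abs_neg, abs_mul, abs_two] at hlip
  rw [Real.norm_eq_abs, abs_mul, abs_mul]
  nlinarith [abs_nonneg (Real.log δ)]

theorem HasCompactSupport.exists_forall_ne_zero_abs_le {E : Type*} [Zero E] {g : ℝ → E}
    (hg : HasCompactSupport g) : ∃ M, ∀ r, g r ≠ 0 → |r| ≤ M := by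
  obtain ⟨M, hM⟩ := hg.isCompact.isBounded.subset_closedBall 0
  exact ⟨M, fun r hr => by simpa using hM (subset_tsupport g hr)⟩

theorem abs_log_sqrt_sub_add_div_le {A r : ℝ} (hA : 0 < A) (hr : -(8 * A ^ 2) ≤ r) :
    |Real.log ((√(A ^ 2 - r) + A) / (2 * A))| ≤ Real.log 2 := by
  have hlow : 1 / 2 ≤ (√(A ^ 2 - r) + A) / (2 * A) := by
    rw [le_div_iff₀ (by positivity)]
    linarith [Real.sqrt_nonneg (A ^ 2 - r)]
  have hhigh : (√(A ^ 2 - r) + A) / (2 * A) ≤ 2 := by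
    have : √(A ^ 2 - r) ≤ 3 * A :=
      Real.sqrt_le_iff.2 ⟨by positivity, by nlinarith⟩
    rw [div_le_iff₀ (by positivity)]
    linarith
  rw [abs_le]
  constructor
  · have := Real.log_le_log (by norm_num) hlow
    rwa [one_div, Real.log_inv] at this
  · exact Real.log_le_log (by linarith) hhigh

theorem tendsto_log_sqrt_sub_add_div (r : ℝ) :
    Tendsto (fun A => Real.log ((√(A ^ 2 - r) + A) / (2 * A))) atTop (𝓝 0) := by
  have hcont : Continuous fun x => Real.log ((√(1 - x) + 1) / 2) :=
    ((Real.continuous_sqrt.comp (continuous_const.sub continuous_id)).add continuous_const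
      |>.div_const 2).log fun x => (by positivity : (0:ℝ) < (√(1 - x) + 1) / 2).ne'
  have hlim : Tendsto (fun A => Real.log ((√(1 - r / A ^ 2) + 1) / 2)) atTop (𝓝 0) := by
    simpa [Function.comp_def] using (hcont.tendsto 0).comp
      (tendsto_const_nhds.div_atTop (tendsto_pow_atTop two_ne_zero))
  refine hlim.congr' ?_
  filter_upwards [eventually_gt_atTop 0] with A hA
  congr 1
  rw [show A ^ 2 - r = A ^ 2 * (1 - r / A ^ 2) by field_simp, Real.sqrt_mul (by positivity),
    Real.sqrt_sq hA.le]
  field_simp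

theorem HasCompactSupport.tendsto_integral_mul_log_sqrt_sub_add_div {g : ℝ → ℝ}
    (hg : Integrable g) (hgc : HasCompactSupport g) :
    Tendsto (fun A => ∫ r, g r * Real.log ((√(A ^ 2 - r) + A) / (2 * A))) atTop (𝓝 0) := by
  obtain ⟨M, hM⟩ := hgc.exists_forall_ne_zero_abs_le
  have hdom : ∀ᶠ A in atTop, ∀ r, ‖g r * Real.log ((√(A ^ 2 - r) + A) / (2 * A))‖ ≤
      ‖g r‖ * Real.log 2 := by
    filter_upwards [eventually_ge_atTop (max 1 M)] with A hA r
    rcases eq_or_ne (g r) 0 with hr | hr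
    · simp [hr]
    rw [norm_mul, Real.norm_eq_abs (Real.log _)]
    have hA1 := le_of_max_le_left hA
    refine mul_le_mul_of_nonneg_left (abs_log_sqrt_sub_add_div_le (by linarith) ?_) (norm_nonneg _)
    nlinarith [neg_abs_le r, hM r hr, le_of_max_le_right hA]
  have hlim := tendsto_integral_filter_of_dominated_convergence _
    (.of_forall fun A => hg.aestronglyMeasurable.mul (by fun_prop : Measurable fun r =>
      Real.log ((√(A ^ 2 - r) + A) / (2 * A))).aestronglyMeasurable)
    (hdom.mono fun A hA => .of_forall hA) (hg.norm.mul_const _)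
    (.of_forall fun r => (tendsto_log_sqrt_sub_add_div r).const_mul (g r))
  simpa using hlim

section CompactSupport

variable {f : ℝ → ℝ}

theorem DifferentiableAt.hasDerivAt_mul_log {r : ℝ} (hf : DifferentiableAt ℝ f r)
    (hr : r ≠ 0) :
    HasDerivAt (fun r => f r * Real.log r) (deriv f r * Real.log r + f r / r) r :=
  (hf.hasDerivAt.mul (Real.hasDerivAt_log hr)).congr_deriv (by rw [div_eq_mul_inv])

theorem HasCompactSupport.integrable_deriv_mul_log (hf : ContDiff ℝ 1 f)
    (hfc : HasCompactSupport f) : Integrable fun r => deriv f r * Real.log r :=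
  Real.locallyIntegrable_log.integrable_smul_left_of_hasCompactSupport
    (hf.continuous_deriv le_rfl) hfc.deriv

theorem HasCompactSupport.setIntegral_Ioi_div_eq (hf : ContDiff ℝ 1 f)
    (hfc : HasCompactSupport f) {δ : ℝ} (hδ : 0 < δ) :
    ∫ r in Ioi δ, f r / r = -(f δ * Real.log δ) - ∫ r in Ioi δ, deriv f r * Real.log r := by
  have hint : IntegrableOn (fun r => f r / r) (Ioi δ) :=
    (integrableOn_div_of_le_abs (hf.continuous.integrable_of_hasCompactSupport hfc) hδ).mono_set
      fun r (hr : δ < r) => hr.le.trans (le_abs_self r)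
  have hftc := integral_Ioi_of_hasDerivAt_of_tendsto'
    (fun r (hr : δ ≤ r) =>
      (hf.differentiable one_ne_zero r).hasDerivAt_mul_log (hδ.trans_le hr).ne')
    ((hfc.integrable_deriv_mul_log hf).integrableOn.add hint)
    ((hfc.mul_right (f' := Real.log)).is_zero_at_infty.mono_left atTop_le_cocompact)
  rw [integral_add (hfc.integrable_deriv_mul_log hf).integrableOn hint] at hftc
  linarith

theorem HasCompactSupport.setIntegral_Iic_div_eq (hf : ContDiff ℝ 1 f)
    (hfc : HasCompactSupport f) {δ : ℝ} (hδ : 0 < δ) :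
    ∫ r in Iic (-δ), f r / r =
      f (-δ) * Real.log δ - ∫ r in Iic (-δ), deriv f r * Real.log r := by
  have hint : IntegrableOn (fun r => f r / r) (Iic (-δ)) :=
    (integrableOn_div_of_le_abs (hf.continuous.integrable_of_hasCompactSupport hfc) hδ).mono_set
      fun r (hr : r ≤ -δ) => show δ ≤ |r| by rw [abs_of_neg (by linarith)]; linarith
  have hftc := integral_Iic_of_hasDerivAt_of_tendsto'
    (fun r (hr : r ≤ -δ) =>
      (hf.differentiable one_ne_zero r).hasDerivAt_mul_log (by linarith : r < 0).ne)
    ((hfc.integrable_deriv_mul_log hf).integrableOn.add hint)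
    ((hfc.mul_right (f' := Real.log)).is_zero_at_infty.mono_left atBot_le_cocompact)
  rw [integral_add (hfc.integrable_deriv_mul_log hf).integrableOn hint, Real.log_neg_eq_log] at hftc
  linarith

theorem HasCompactSupport.setIntegral_lt_abs_div_eq (hf : ContDiff ℝ 1 f)
    (hfc : HasCompactSupport f) {δ : ℝ} (hδ : 0 < δ) :
    ∫ r in {r | δ < |r|}, f r / r =
      (f (-δ) - f δ) * Real.log δ - ∫ r in {r | δ < |r|}, deriv f r * Real.log r := by
  have hsplit : {r : ℝ | δ < |r|} = Iio (-δ) ∪ Ioi δ := by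
    ext r
    simp only [mem_ofPred_eq, lt_abs, mem_union, mem_Iio, mem_Ioi, lt_neg]
    tauto
  have hdisj : Disjoint (Iio (-δ)) (Ioi δ) :=
    (Iio_disjoint_Ici (by linarith)).mono_right Ioi_subset_Ici_self
  have hlog := hfc.integrable_deriv_mul_log hf
  have hdiv := integrableOn_div_of_le_abs (hf.continuous.integrable_of_hasCompactSupport hfc) hδ
  rw [hsplit, setIntegral_union hdisj measurableSet_Ioi
      (hdiv.mono_set fun r (hr : r < -δ) => ?_) (hdiv.mono_set fun r (hr : δ < r) => ?_),
    setIntegral_union hdisj measurableSet_Ioi hlog.integrableOn hlog.integrableOn,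
    setIntegral_congr_set Iio_ae_eq_Iic,
    setIntegral_congr_set (f := fun r => deriv f r * Real.log r) Iio_ae_eq_Iic,
    hfc.setIntegral_Iic_div_eq hf hδ, hfc.setIntegral_Ioi_div_eq hf hδ]
  · ring
  · show δ ≤ |r|
    rw [abs_of_neg (by linarith)]
    linarith
  · exact hr.le.trans (le_abs_self r)

theorem HasCompactSupport.tendsto_setIntegral_lt_abs_div (hf : ContDiff ℝ 1 f)
    (hfc : HasCompactSupport f) :
    Tendsto (fun δ => ∫ r in {r | δ < |r|}, f r / r) (𝓝[>] 0)
      (𝓝 (-∫ r, deriv f r * Real.log r)) := by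
  obtain ⟨C, hC⟩ := hf.lipschitzWith_of_hasCompactSupport hfc one_ne_zero
  have hlim := (hC.tendsto_sub_mul_log.mono_left nhdsWithin_le_nhds).sub
    (tendsto_setIntegral_lt_abs (hfc.integrable_deriv_mul_log hf))
  rw [zero_sub] at hlim
  refine hlim.congr' ?_
  filter_upwards [self_mem_nhdsWithin] with δ (hδ : 0 < δ)
  exact (hfc.setIntegral_lt_abs_div_eq hf hδ).symm

theorem HasCompactSupport.tendsto_setIntegral_Iic_sq_deriv_mul (hf : ContDiff ℝ 1 f)
    (hfc : HasCompactSupport f) :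
    Tendsto (fun A => ∫ r in Iic (A ^ 2),
        deriv f r * (Real.log (√(A ^ 2 - r) + A) - (1 / 2) * Real.log |r|))
      atTop (𝓝 (-(∫ r, deriv f r * Real.log r) / 2)) := by
  have hf'c : Continuous (deriv f) := hf.continuous_deriv le_rfl
  have hf' : Integrable (deriv f) := hf'c.integrable_of_hasCompactSupport hfc.deriv
  have hlog := hfc.integrable_deriv_mul_log hf
  have hmean : ∫ r, deriv f r = 0 := integral_eq_zero_of_hasDerivAt_of_integrable
    (fun r => (hf.differentiable one_ne_zero r).hasDerivAt) hf'
    (hf.continuous.integrable_of_hasCompactSupport hfc)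
  obtain ⟨M, hM⟩ := hfc.deriv.exists_forall_ne_zero_abs_le
  have hlim := (hfc.deriv.tendsto_integral_mul_log_sqrt_sub_add_div hf').sub
    (tendsto_const_nhds (x := (1 / 2) * ∫ r, deriv f r * Real.log r))
  rw [show ∀ I : ℝ, -I / 2 = 0 - (1 / 2) * I from fun I => by ring]
  refine hlim.congr' ?_
  filter_upwards [eventually_ge_atTop (max 1 M)] with A hAM
  have hA : 0 < A := by linarith [le_of_max_le_left hAM]
  have hsplit : ∀ r, deriv f r * (Real.log (√(A ^ 2 - r) + A) - (1 / 2) * Real.log |r|) =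
      deriv f r * Real.log ((√(A ^ 2 - r) + A) / (2 * A)) -
        (1 / 2) * (deriv f r * Real.log r) + Real.log (2 * A) * deriv f r := fun r => by
    rw [Real.log_div (by positivity) (by positivity), Real.log_abs]
    ring
  have hint : Integrable fun r => deriv f r * Real.log ((√(A ^ 2 - r) + A) / (2 * A)) := by
    refine (hf'c.mul (Continuous.log (by fun_prop) fun r => ?_)).integrable_of_hasCompactSupport
      hfc.deriv.mul_right
    exact (by positivity : (0 : ℝ) < (√(A ^ 2 - r) + A) / (2 * A)).ne'
  rw [setIntegral_eq_integral_of_forall_compl_eq_zero fun r hr => ?_]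
  · simp only [hsplit]
    have hint' : Integrable fun r => deriv f r * Real.log ((√(A ^ 2 - r) + A) / (2 * A)) -
        (1 / 2) * (deriv f r * Real.log r) := hint.sub (hlog.const_mul _)
    rw [integral_add hint' (hf'.const_mul _), integral_sub hint
      (hlog.const_mul _), integral_const_mul, integral_const_mul, hmean]
    ring
  · by_contra hne
    have := hM r (left_ne_zero_of_mul hne)
    have hr' : A ^ 2 < r := not_le.1 hr
    nlinarith [le_abs_self r, le_of_max_le_left hAM, le_of_max_le_right hAM]

end CompactSupport

/-- The limit as `A → ∞` of `∫_{-∞}^{A²} φ'(h+r)(log(√(A²-r)+A) - ½ log|r|) dr`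
equals one half of the principal value integral `p.v. ∫ φ(h+r)/r dr`. -/
theorem stmt_5 (φ : ℝ → ℝ) (hsm : ContDiff ℝ 1 φ) (hsupp : HasCompactSupport φ) :
    ∀ h : ℝ, ∃ L : ℝ,
      Tendsto (fun δ : ℝ => ∫ r in {r : ℝ | δ < |r|}, φ (h + r) / r)
        (nhdsWithin 0 (Ioi 0)) (nhds L) ∧
      Tendsto (fun A : ℝ =>
          ∫ r in Iic (A ^ 2),
            deriv φ (h + r) * (Real.log (Real.sqrt (A ^ 2 - r) + A) - (1/2) * Real.log |r|))
        atTop (nhds (L / 2)) := by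
  intro h
  have hf : ContDiff ℝ 1 fun r => φ (h + r) := hsm.comp (contDiff_const.add contDiff_id)
  have hfc : HasCompactSupport fun r => φ (h + r) := hsupp.comp_homeomorph (Homeomorph.addLeft h)
  have hderiv : ∀ r, deriv (fun r => φ (h + r)) r = deriv φ (h + r) :=
    fun r => deriv_comp_const_add φ h r
  refine ⟨_, hfc.tendsto_setIntegral_lt_abs_div hf, ?_⟩
  simpa only [hderiv] using hfc.tendsto_setIntegral_Iic_sq_deriv_mul hf
end

section
/- Let K: ℝ → ℝ be measurable with |K(t)| ≤ C/(1+|t|^{β+1}) for some β > s − 1 > 0, and A(t) := a_+ t_+^{s−1} + a_− t_−^{s−1}. Define ψ(t,p) := ∑_{j∈ℤ} K(t−j)A(j−p) and Ψ(u) := ∫_ℝ K(u−r)A(r) dr. Then for all t, p ∈ ℝ, ∫_0^1 ψ(t+r, p+r) dr = Ψ(t−p). -/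
open MeasureTheory

/-!
Put `f v := K (t - p - v) * A v`, so that `ψ (t + r) (p + r) = ∑ⱼ f (j - p - r)`. Since `K` decays
like `(1 + |x|)^(-(β+1))` and `A` grows like `(1 + |x|)^(s-1)`, Peetre's inequality
`1 + |v| ≤ (1 + |u|) (1 + |u - v|)` dominates `f` by a multiple of `(1 + |t - p - v|)^(-(β-s+2))`,
which is integrable as `β - s + 2 > 1`. For integrable `f` the integral over `[0, 1]` of its
periodization is `∫ f`: the unit intervals translated by `ℤ` tile the line, and the integrals of
`‖f‖` over the tiles are summable, so sum and integral may be exchanged.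
-/

section Periodization

variable {E : Type*} [NormedAddCommGroup E] [NormedSpace ℝ E] {f : ℝ → E}

theorem MeasureTheory.Integrable.intervalIntegral_tsum_comp_add_int (hf : Integrable f) :
    ∫ x in (0 : ℝ)..1, ∑' n : ℤ, f (x + n) = ∫ x, f x := by
  rw [← hf.hasSum_intervalIntegral_comp_add_int.tsum_eq]
  simp only [intervalIntegral.integral_of_le zero_le_one]
  refine (integral_tsum_of_summable_integral_norm (F := fun (n : ℤ) x => f (x + n))
    (fun n => (hf.comp_add_right n).integrableOn) ?_).symm
  simpa only [intervalIntegral.integral_of_le zero_le_one] using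
    hf.norm.hasSum_intervalIntegral_comp_add_int.summable

theorem MeasureTheory.Integrable.intervalIntegral_tsum_comp_int_sub (hf : Integrable f) :
    ∫ x in (0 : ℝ)..1, ∑' n : ℤ, f (n - x) = ∫ x, f x := by
  rw [← integral_neg_eq_self, ← hf.comp_neg.intervalIntegral_tsum_comp_add_int]
  refine intervalIntegral.integral_congr fun x _ => ?_
  rw [← (Equiv.neg ℤ).tsum_eq]
  congr 1 with n
  simp only [Equiv.neg_apply, Int.cast_neg]
  ring_nf

end Periodization

lemma one_add_abs_le_mul_one_add_abs_sub (u v : ℝ) : 1 + |v| ≤ (1 + |u|) * (1 + |u - v|) := by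
  have h := abs_sub_abs_le_abs_sub v u
  rw [abs_sub_comm] at h
  nlinarith [abs_nonneg u, abs_nonneg (u - v)]

lemma abs_le_mul_one_add_abs_rpow_neg {K : ℝ → ℝ} {C b : ℝ} (hb : 1 ≤ b)
    (hK : ∀ t, |K t| ≤ C / (1 + |t| ^ b)) (t : ℝ) :
    |K t| ≤ 2 ^ (b - 1) * C * (1 + |t|) ^ (-b) := by
  have hden : 0 < 1 + |t| ^ b := by positivity
  have hC : 0 ≤ C := by simpa using (le_div_iff₀ hden).1 ((abs_nonneg _).trans (hK t))
  have hpow : (1 + |t|) ^ b ≤ 2 ^ (b - 1) * (1 + |t| ^ b) := by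
    have h := NNReal.coe_le_coe.2 (NNReal.rpow_add_le_mul_rpow_add_rpow 1 ‖t‖₊ hb)
    simpa [NNReal.coe_rpow] using h
  calc |K t| ≤ C / (1 + |t| ^ b) := hK t
    _ ≤ 2 ^ (b - 1) * C / (1 + |t|) ^ b := by
        rw [div_le_div_iff₀ hden (by positivity)]
        nlinarith
    _ = 2 ^ (b - 1) * C * (1 + |t|) ^ (-b) := by
        rw [Real.rpow_neg (by positivity), div_eq_mul_inv]

lemma abs_mul_max_rpow_add_mul_max_neg_rpow_le (a b : ℝ) {e : ℝ} (he : 0 ≤ e) (v : ℝ) :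
    |a * max v 0 ^ e + b * max (-v) 0 ^ e| ≤ (|a| + |b|) * (1 + |v|) ^ e := by
  have hpos : max v 0 ^ e ≤ (1 + |v|) ^ e :=
    Real.rpow_le_rpow (le_max_right _ _) (max_le (by linarith [le_abs_self v]) (by positivity)) he
  have hneg : max (-v) 0 ^ e ≤ (1 + |v|) ^ e :=
    Real.rpow_le_rpow (le_max_right _ _) (max_le (by linarith [neg_le_abs v]) (by positivity)) he
  calc |a * max v 0 ^ e + b * max (-v) 0 ^ e|
      ≤ |a| * max v 0 ^ e + |b| * max (-v) 0 ^ e := by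
        refine (abs_add_le _ _).trans_eq ?_
        rw [abs_mul, abs_mul, abs_of_nonneg (Real.rpow_nonneg (le_max_right _ _) _),
          abs_of_nonneg (Real.rpow_nonneg (le_max_right _ _) _)]
    _ ≤ (|a| + |b|) * (1 + |v|) ^ e := by
        rw [add_mul]
        gcongr

theorem integrable_mul_comp_sub_of_decay {K A : ℝ → ℝ} {a e CK CA : ℝ}
    (hKm : Measurable K) (hAm : Measurable A) (he : 0 ≤ e) (hae : 1 < a - e)
    (hK : ∀ t, |K t| ≤ CK * (1 + |t|) ^ (-a)) (hA : ∀ v, |A v| ≤ CA * (1 + |v|) ^ e) (u : ℝ) :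
    Integrable fun v => K (u - v) * A v := by
  have hCK : 0 ≤ CK := by simpa using (abs_nonneg _).trans (hK 0)
  have hCA : 0 ≤ CA := by simpa using (abs_nonneg _).trans (hA 0)
  have hdom : Integrable fun v : ℝ => (1 + ‖u - v‖) ^ (-(a - e)) :=
    (integrable_one_add_norm (by simpa using hae)).comp_sub_left u
  refine (hdom.const_mul (CK * CA * (1 + |u|) ^ e)).mono' (by fun_prop)
    (ae_of_all _ fun v => ?_)
  calc ‖K (u - v) * A v‖ = |K (u - v)| * |A v| := by rw [Real.norm_eq_abs, abs_mul]
    _ ≤ CK * (1 + |u - v|) ^ (-a) * (CA * ((1 + |u|) * (1 + |u - v|)) ^ e) := by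
        gcongr
        · exact hK _
        · exact (hA v).trans (by gcongr; exact one_add_abs_le_mul_one_add_abs_sub u v)
    _ = CK * CA * (1 + |u|) ^ e * (1 + ‖u - v‖) ^ (-(a - e)) := by
        rw [Real.mul_rpow (by positivity) (by positivity), Real.norm_eq_abs, neg_sub,
          sub_eq_add_neg e a, add_comm e, Real.rpow_add (by positivity)]
        ring

theorem stmt_11_general (s β C aPlus aMinus : ℝ) (hs : 1 < s) (hβs : 0 < β - s + 1)
    (K : ℝ → ℝ) (hKm : Measurable K) (hK : ∀ t : ℝ, |K t| ≤ C / (1 + |t| ^ (β + 1)))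
    (A : ℝ → ℝ)
    (hA : ∀ t : ℝ, A t = aPlus * (max t 0) ^ (s - 1) + aMinus * (max (-t) 0) ^ (s - 1))
    (ψ : ℝ → ℝ → ℝ) (hψ : ∀ t p : ℝ, ψ t p = ∑' j : ℤ, K (t - j) * A ((j : ℝ) - p))
    (Ψ : ℝ → ℝ) (hΨ : ∀ u : ℝ, Ψ u = ∫ r : ℝ, K (u - r) * A r) :
    ∀ t p : ℝ, (∫ r in (0:ℝ)..1, ψ (t + r) (p + r)) = Ψ (t - p) := by
  intro t p
  have hAm : Measurable A := by
    rw [funext hA]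
    fun_prop
  have hf : Integrable fun v => K (t - p - v) * A v :=
    integrable_mul_comp_sub_of_decay hKm hAm (by linarith) (by linarith)
      (abs_le_mul_one_add_abs_rpow_neg (by linarith) hK)
      (fun v => hA v ▸ abs_mul_max_rpow_add_mul_max_neg_rpow_le aPlus aMinus (by linarith) v)
      (t - p)
  rw [hΨ, ← integral_sub_right_eq_self _ p,
    ← (hf.comp_sub_right p).intervalIntegral_tsum_comp_int_sub]
  refine intervalIntegral.integral_congr fun r _ => ?_
  rw [hψ]
  congr 1 with j
  congr 2 <;> ring

/-- Averaging identity `∫_0^1 ψ(t+r, p+r) dr = Ψ(t-p)` for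
`ψ(t,p) = ∑_j K(t-j)A(j-p)` and `Ψ(u) = ∫ K(u-r)A(r) dr`, under the decay
condition `|K(t)| ≤ C/(1+|t|^{β+1})` with `β - s + 1 > 0`, `s > 1`. -/
theorem stmt_11 (s β C aPlus aMinus : ℝ) (hs : 1 < s) (hβ : 1 ≤ β) (hβs : 0 < β - s + 1)
    (K : ℝ → ℝ) (hKm : Measurable K) (hK : ∀ t : ℝ, |K t| ≤ C / (1 + |t| ^ (β + 1)))
    (A : ℝ → ℝ)
    (hA : ∀ t : ℝ, A t = aPlus * (max t 0) ^ (s - 1) + aMinus * (max (-t) 0) ^ (s - 1))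
    (ψ : ℝ → ℝ → ℝ) (hψ : ∀ t p : ℝ, ψ t p = ∑' j : ℤ, K (t - j) * A ((j : ℝ) - p))
    (Ψ : ℝ → ℝ) (hΨ : ∀ u : ℝ, Ψ u = ∫ r : ℝ, K (u - r) * A r) :
    ∀ t p : ℝ, (∫ r in (0:ℝ)..1, ψ (t + r) (p + r)) = Ψ (t - p) :=
  stmt_11_general s β C aPlus aMinus hs hβs K hKm hK A hA ψ hψ Ψ hΨ
end

section
/- As distributions on ℝ, for every positive integer n: (x ± i0)^{−n} = p.v. x^{−n} ∓ iπ·(−1)^{n−1}/(n−1)! · δ^{(n−1)}(x), where p.v. x^{−n} is the principal-value (finite-part) distribution and δ^{(n−1)} is the (n−1)-st derivative of the Dirac delta. -/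
/-!
Integrating by parts `n - 1` times turns `⟨(x ± iε)^{-n}, φ⟩` into
`⟨(x ± iε)^{-1}, φ^{(n-1)}⟩ / (n-1)!`, so it suffices to treat `n = 1`. There
`(x ± iε)⁻¹ = x/(x² + ε²) ∓ i ε/(x² + ε²)`. After symmetrizing `x ↦ -x`, the first kernel
converges to `p.v. 1/x` by dominated convergence, since `(ψ x - ψ (-x))/x` is integrable on
`(0, ∞)`; the second is the Poisson kernel, an approximate identity of total mass `π`.
-/

open MeasureTheory Filter Set Topology Complex

section

variable {E : Type*} [NormedAddCommGroup E] [NormedSpace ℝ E]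

theorem setIntegral_lt_abs_eq_integral_Ioi_add_neg {f : ℝ → E} {δ : ℝ} (hδ : 0 ≤ δ)
    (hf : IntegrableOn f {x | δ < |x|}) :
    ∫ x in {x | δ < |x|}, f x = ∫ x in Ioi δ, (f x + f (-x)) := by
  have hsplit : {x : ℝ | δ < |x|} = Iio (-δ) ∪ Ioi δ := by
    ext x; simp only [mem_ofPred_eq, lt_abs, mem_union, mem_Iio, mem_Ioi, lt_neg]; tauto
  rw [hsplit] at hf ⊢
  have hneg : IntegrableOn (fun x => f (-x)) (Ioi δ) := by
    rw [← (Measure.measurePreserving_neg volume).integrableOn_comp_preimage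
      (Homeomorph.neg ℝ).measurableEmbedding] at hf
    exact hf.mono_set fun x hx => by simp_all
  have hdisj : Disjoint (Iio (-δ)) (Ioi δ) :=
    (Iio_disjoint_Ici (by linarith)).mono_right Ioi_subset_Ici_self
  rw [integral_add (hf.mono_set subset_union_right) hneg, integral_comp_neg_Ioi,
    integral_Iic_eq_integral_Iio, setIntegral_union hdisj measurableSet_Ioi
      (hf.mono_set subset_union_left) (hf.mono_set subset_union_right), add_comm]

theorem integral_eq_integral_Ioi_add_neg {f : ℝ → E} (hf : Integrable f) :
    ∫ x, f x = ∫ x in Ioi 0, (f x + f (-x)) := by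
  rw [integral_eq_setIntegral (s := {x | 0 < |x|}) ?_,
    setIntegral_lt_abs_eq_integral_Ioi_add_neg le_rfl hf.integrableOn]
  filter_upwards [Measure.ae_ne volume 0] with x hx using abs_pos.2 hx

theorem tendsto_setIntegral_Ioi_nhdsGT {g : ℝ → E} {a : ℝ} (hg : IntegrableOn g (Ioi a)) :
    Tendsto (fun δ => ∫ x in Ioi δ, g x) (𝓝[>] a) (𝓝 (∫ x in Ioi a, g x)) := by
  refine ((aecover_Ioi_of_Ioi (μ := volume) (l := 𝓝[>] a)
    nhdsWithin_le_nhds).integral_tendsto_of_countably_generated hg).congr' ?_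
  filter_upwards [self_mem_nhdsWithin] with δ hδ
  rw [Measure.restrict_restrict measurableSet_Ioi, Ioi_inter_Ioi, sup_eq_left.2 (le_of_lt hδ)]

theorem tendsto_setIntegral_Ioi_sq_div_sq_add_sq_smul {g : ℝ → E} (hg : IntegrableOn g (Ioi 0)) :
    Tendsto (fun ε : ℝ => ∫ x in Ioi 0, (x ^ 2 / (x ^ 2 + ε ^ 2)) • g x) (𝓝 0)
      (𝓝 (∫ x in Ioi 0, g x)) := by
  refine tendsto_integral_filter_of_dominated_convergence (fun x => ‖g x‖)
    (Eventually.of_forall fun ε => ?_) (Eventually.of_forall fun ε => ae_of_all _ fun x => ?_)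
    hg.norm ((ae_restrict_mem measurableSet_Ioi).mono fun x (hx : 0 < x) => ?_)
  · exact (by fun_prop : Measurable fun x : ℝ => x ^ 2 / (x ^ 2 + ε ^ 2)).aestronglyMeasurable.smul
      hg.aestronglyMeasurable
  · rw [norm_smul, Real.norm_of_nonneg (by positivity)]
    exact mul_le_of_le_one_left (norm_nonneg _)
      (div_le_one_of_le₀ (le_add_of_nonneg_right (sq_nonneg ε)) (by positivity))
  · have h : Tendsto (fun ε : ℝ => x ^ 2 / (x ^ 2 + ε ^ 2)) (𝓝 0) (𝓝 (x ^ 2 / (x ^ 2 + 0 ^ 2))) :=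
      (continuousAt_const.div (by fun_prop) (by positivity)).tendsto
    rw [zero_pow two_ne_zero, add_zero, div_self (by positivity)] at h
    simpa using h.smul_const (g x)

theorem tendsto_integral_div_sq_add_sq_smul [CompleteSpace E] {ψ : ℝ → E} (hψ : Continuous ψ)
    {M : ℝ} (hM : ∀ x, ‖ψ x‖ ≤ M) :
    Tendsto (fun ε : ℝ => ∫ x, (ε / (x ^ 2 + ε ^ 2)) • ψ x) (𝓝[>] 0) (𝓝 (Real.pi • ψ 0)) := by
  have hscale : ∀ ε : ℝ, 0 < ε →
      ∫ x, (ε / (x ^ 2 + ε ^ 2)) • ψ x = ∫ u, (1 + u ^ 2)⁻¹ • ψ (ε * u) := by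
    intro ε hε
    have := Measure.integral_comp_mul_left (fun x : ℝ => (ε / (x ^ 2 + ε ^ 2)) • ψ x) ε
    rw [abs_of_pos (inv_pos.2 hε), eq_inv_smul_iff₀ hε.ne', ← integral_smul] at this
    rw [← this]
    congr 1 with u
    rw [smul_smul]
    congr 1
    field_simp
    ring
  have hlim : Tendsto (fun ε : ℝ => ∫ u, (1 + u ^ 2)⁻¹ • ψ (ε * u)) (𝓝 0)
      (𝓝 (∫ u : ℝ, (1 + u ^ 2)⁻¹ • ψ 0)) := by
    refine tendsto_integral_filter_of_dominated_convergence (fun u => (1 + u ^ 2)⁻¹ * M)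
      (Eventually.of_forall fun ε => by fun_prop)
      (Eventually.of_forall fun ε => ae_of_all _ fun u => ?_)
      (integrable_inv_one_add_sq.mul_const M) (ae_of_all _ fun u => ?_)
    · rw [norm_smul, Real.norm_of_nonneg (by positivity)]
      exact mul_le_mul_of_nonneg_left (hM _) (by positivity)
    · exact ((hψ.tendsto' 0 _ (by simp)).comp
        ((continuous_mul_const u).tendsto' 0 0 (zero_mul u))).const_smul _
  rw [integral_smul_const, integral_univ_inv_one_add_sq] at hlim
  exact (hlim.mono_left nhdsWithin_le_nhds).congr'
    (eventually_nhdsWithin_of_forall fun ε hε => (hscale ε hε).symm)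

end

theorem norm_ofReal_add_zpow_neg_le {c : ℂ} (hc : c.im ≠ 0) (k : ℕ) (x : ℝ) :
    ‖((x : ℂ) + c) ^ (-(k : ℤ))‖ ≤ |c.im|⁻¹ ^ k := by
  rw [zpow_neg, zpow_natCast, norm_inv, norm_pow, ← inv_pow]
  refine pow_le_pow_left₀ (by positivity) (inv_anti₀ (abs_pos.2 hc) ?_) k
  simpa using abs_im_le_norm ((x : ℂ) + c)

theorem ofReal_add_ne_zero {c : ℂ} (hc : c.im ≠ 0) (x : ℝ) : (x : ℂ) + c ≠ 0 := fun h =>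
  hc (by simpa using congrArg im h)

theorem MeasureTheory.Integrable.ofReal_add_zpow_neg_mul {c : ℂ} (hc : c.im ≠ 0) (k : ℕ) {f : ℝ → ℂ}
    (hf : Integrable f) : Integrable fun x : ℝ => ((x : ℂ) + c) ^ (-(k : ℤ)) * f x :=
  hf.bdd_mul ((continuous_ofReal.add continuous_const).zpow₀ _
      fun x => Or.inl (ofReal_add_ne_zero hc x)).aestronglyMeasurable
    (ae_of_all _ (norm_ofReal_add_zpow_neg_le hc k))

theorem hasDerivAt_ofReal_add_zpow {c : ℂ} (hc : c.im ≠ 0) (m : ℤ) (x : ℝ) :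
    HasDerivAt (fun y : ℝ => ((y : ℂ) + c) ^ m) (m * ((x : ℂ) + c) ^ (m - 1)) x := by
  simpa using ((hasDerivAt_zpow m _ (Or.inl (ofReal_add_ne_zero hc x))).comp (x : ℂ)
    ((hasDerivAt_id (x : ℂ)).add_const c)).comp_ofReal

theorem inv_ofReal_add_mul_I {σ : ℝ} (hσ : σ ^ 2 = 1) {ε : ℝ} (hε : ε ≠ 0) (x : ℝ) :
    ((x : ℂ) + σ * ε * I)⁻¹ =
      ((x / (x ^ 2 + ε ^ 2) : ℝ) : ℂ) - σ * I * ((ε / (x ^ 2 + ε ^ 2) : ℝ) : ℂ) := by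
  have hd : (x : ℂ) ^ 2 + (ε : ℂ) ^ 2 ≠ 0 := by exact_mod_cast (by positivity : x ^ 2 + ε ^ 2 ≠ 0)
  refine inv_eq_of_mul_eq_one_right ?_
  push_cast
  field_simp
  linear_combination (ε : ℂ) ^ 2 * (by exact_mod_cast hσ : (σ : ℂ) ^ 2 = 1)
    - (σ : ℂ) ^ 2 * (ε : ℂ) ^ 2 * I_sq

namespace SchwartzMap

theorem exists_lipschitzWith {E : Type*} [NormedAddCommGroup E] [NormedSpace ℝ E] (ψ : 𝓢(ℝ, E)) :
    ∃ C, LipschitzWith C ψ := by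
  refine ⟨(SchwartzMap.seminorm ℝ 0 0 (derivCLM ℝ E ψ)).toNNReal,
    lipschitzWith_of_nnnorm_deriv_le ψ.differentiable fun x => ?_⟩
  rw [← NNReal.coe_le_coe, coe_nnnorm, Real.coe_toNNReal _ (apply_nonneg _ _)]
  exact (derivCLM ℝ E ψ).norm_le_seminorm ℝ x

theorem integrableOn_Ioi_sub_comp_neg_div (ψ : 𝓢(ℝ, ℂ)) :
    IntegrableOn (fun x : ℝ => (ψ x - ψ (-x)) / x) (Ioi 0) := by
  obtain ⟨C, hC⟩ := ψ.exists_lipschitzWith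
  have hmeas : AEStronglyMeasurable (fun x : ℝ => (ψ x - ψ (-x)) / x) :=
    (by fun_prop : Measurable fun x : ℝ => (ψ x - ψ (-x)) / x).aestronglyMeasurable
  rw [← Ioc_union_Ioi_eq_Ioi zero_le_one]
  refine IntegrableOn.union ?_ ?_
  · refine Measure.integrableOn_of_bounded (M := 2 * C) measure_Ioc_lt_top.ne hmeas
      ((ae_restrict_mem measurableSet_Ioc).mono fun x hx => ?_)
    have hx0 : 0 < x := hx.1
    have := hC.dist_le_mul x (-x)
    rw [dist_eq_norm, Real.dist_eq, sub_neg_eq_add, ← two_mul, abs_of_pos (by positivity)] at this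
    rw [norm_div, Complex.norm_real, Real.norm_of_nonneg hx0.le, div_le_iff₀ hx0]
    linarith
  · refine Integrable.mono (ψ.integrable.sub ψ.integrable.comp_neg).integrableOn hmeas.restrict
      ((ae_restrict_mem measurableSet_Ioi).mono fun x (hx : 1 < x) => ?_)
    rw [norm_div, Complex.norm_real, Real.norm_of_nonneg (by linarith)]
    exact div_le_self (norm_nonneg _) hx.le

/-- `⟨p.v. 1/x, ψ⟩`, written as an absolutely convergent integral by symmetrizing `x ↦ -x`. -/
noncomputable def pvInv (ψ : 𝓢(ℝ, ℂ)) : ℂ := ∫ x in Ioi 0, (ψ x - ψ (-x)) / x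

theorem tendsto_setIntegral_lt_abs_div (ψ : 𝓢(ℝ, ℂ)) :
    Tendsto (fun δ : ℝ => ∫ x in {x : ℝ | δ < |x|}, ψ x / x) (𝓝[>] 0) (𝓝 ψ.pvInv) := by
  refine (tendsto_setIntegral_Ioi_nhdsGT ψ.integrableOn_Ioi_sub_comp_neg_div).congr'
    (eventually_nhdsWithin_of_forall fun δ (hδ : 0 < δ) => ?_)
  have hint : IntegrableOn (fun x : ℝ => ψ x / x) {x | δ < |x|} := by
    simp_rw [div_eq_mul_inv]
    refine ψ.integrable.integrableOn.mul_bdd (c := δ⁻¹)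
      (by fun_prop : Measurable fun x : ℝ => (x : ℂ)⁻¹).aestronglyMeasurable
      ((ae_restrict_mem (measurableSet_lt measurable_const measurable_abs)).mono fun x hx => ?_)
    rw [norm_inv, Complex.norm_real, Real.norm_eq_abs]
    exact inv_anti₀ hδ (le_of_lt hx)
  show _ = ∫ x in {x : ℝ | δ < |x|}, ψ x / x
  rw [setIntegral_lt_abs_eq_integral_Ioi_add_neg hδ.le hint]
  congr 1 with x
  push_cast
  rw [div_neg, sub_div, sub_eq_add_neg]

theorem integral_inv_ofReal_add_mul_I_mul (ψ : 𝓢(ℝ, ℂ)) {σ : ℝ} (hσ : σ ^ 2 = 1) {ε : ℝ}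
    (hε : 0 < ε) :
    ∫ x : ℝ, ((x : ℂ) + σ * ε * I)⁻¹ * ψ x =
      (∫ x in Ioi 0, (x ^ 2 / (x ^ 2 + ε ^ 2)) • ((ψ x - ψ (-x)) / x))
        - σ * I * ∫ x, (ε / (x ^ 2 + ε ^ 2)) • ψ x := by
  have hint : ∀ k : ℝ → ℝ, Measurable k → (∀ x, |k x| ≤ ε⁻¹) → Integrable fun x => k x • ψ x :=
    fun k hm hk => ψ.integrable.bdd_smul ε⁻¹ hm.aestronglyMeasurable (ae_of_all _ hk)
  have hodd := hint (fun x => x / (x ^ 2 + ε ^ 2)) (by fun_prop) fun x => by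
    rw [abs_div, abs_of_pos (a := x ^ 2 + ε ^ 2) (by positivity), div_le_iff₀ (by positivity),
      inv_mul_eq_div, le_div_iff₀ hε]
    nlinarith [sq_abs x, sq_nonneg (|x| - ε), abs_nonneg x]
  have heven := hint (fun x => ε / (x ^ 2 + ε ^ 2)) (by fun_prop) fun x => by
    rw [abs_div, abs_of_pos (a := x ^ 2 + ε ^ 2) (by positivity), abs_of_pos hε,
      div_le_iff₀ (by positivity), inv_mul_eq_div, le_div_iff₀ hε]
    nlinarith [sq_nonneg x]
  have hpt : ∀ x : ℝ, ((x : ℂ) + σ * ε * I)⁻¹ * ψ x =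
      (x / (x ^ 2 + ε ^ 2)) • ψ x - σ * I * ((ε / (x ^ 2 + ε ^ 2)) • ψ x) := fun x => by
    rw [inv_ofReal_add_mul_I hσ hε.ne', Complex.real_smul, Complex.real_smul]
    ring
  simp_rw [hpt]
  rw [integral_sub hodd (heven.const_mul _), integral_const_mul,
    integral_eq_integral_Ioi_add_neg hodd]
  congr 1
  refine setIntegral_congr_fun measurableSet_Ioi fun x (hx : 0 < x) => ?_
  simp only [Complex.real_smul]
  push_cast
  field_simp
  ring

theorem tendsto_integral_inv_ofReal_add_mul_I_mul (ψ : 𝓢(ℝ, ℂ)) {σ : ℝ} (hσ : σ ^ 2 = 1) :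
    Tendsto (fun ε : ℝ => ∫ x : ℝ, ((x : ℂ) + σ * ε * I)⁻¹ * ψ x) (𝓝[>] 0)
      (𝓝 (ψ.pvInv - σ * Real.pi * I * ψ 0)) := by
  have hodd := (tendsto_setIntegral_Ioi_sq_div_sq_add_sq_smul
    ψ.integrableOn_Ioi_sub_comp_neg_div).mono_left (nhdsWithin_le_nhds (s := Ioi 0))
  have heven := (tendsto_integral_div_sq_add_sq_smul ψ.continuous
    (ψ.norm_le_seminorm ℝ)).const_mul (σ * I)
  have hlim : ψ.pvInv - σ * Real.pi * I * ψ 0 = ψ.pvInv - σ * I * (Real.pi • ψ 0) := by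
    rw [Complex.real_smul]
    ring
  rw [hlim]
  exact (hodd.sub heven).congr' (eventually_nhdsWithin_of_forall fun ε hε =>
    (ψ.integral_inv_ofReal_add_mul_I_mul hσ hε).symm)

theorem iteratedDeriv_eq_iterate_derivCLM {F : Type*} [NormedAddCommGroup F] [NormedSpace ℝ F]
    (ψ : 𝓢(ℝ, F)) (m : ℕ) : iteratedDeriv m ψ = (derivCLM ℝ F)^[m] ψ := by
  induction m generalizing ψ with
  | zero => rfl
  | succ m ih => rw [iteratedDeriv_succ', Function.iterate_succ_apply, ← ih]; rfl

theorem integral_ofReal_add_zpow_mul_deriv (ψ : 𝓢(ℝ, ℂ)) {c : ℂ} (hc : c.im ≠ 0) (k : ℕ) :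
    ∫ x : ℝ, ((x : ℂ) + c) ^ (-(k : ℤ)) * deriv ψ x
      = k * ∫ x : ℝ, ((x : ℂ) + c) ^ (-(k : ℤ) - 1) * ψ x := by
  have h := integral_mul_deriv_eq_deriv_mul_of_integrable
    (fun x _ => hasDerivAt_ofReal_add_zpow hc (-(k : ℤ)) x) (fun x _ => ψ.hasDerivAt x)
    ((derivCLM ℝ ℂ ψ).integrable.ofReal_add_zpow_neg_mul hc k) ?_
    (ψ.integrable.ofReal_add_zpow_neg_mul hc k)
  · rw [h, ← integral_const_mul, ← integral_neg]
    congr 1 with x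
    push_cast
    ring
  · refine ((ψ.integrable.ofReal_add_zpow_neg_mul hc (k + 1)).const_mul (-(k : ℂ))).congr
      (ae_of_all _ fun x => ?_)
    simp only [Pi.mul_apply]
    push_cast
    ring_nf

theorem integral_ofReal_add_zpow_sub_one_mul (ψ : 𝓢(ℝ, ℂ)) {c : ℂ} (hc : c.im ≠ 0) (m : ℕ) :
    ∫ x : ℝ, ((x : ℂ) + c) ^ (-(m : ℤ) - 1) * ψ x
      = (m.factorial : ℂ)⁻¹ * ∫ x : ℝ, ((x : ℂ) + c)⁻¹ * (derivCLM ℝ ℂ)^[m] ψ x := by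
  induction m generalizing ψ with
  | zero => simp
  | succ m ih =>
    have h := integral_ofReal_add_zpow_mul_deriv ψ hc (m + 1)
    have hk : ((m + 1 : ℕ) : ℂ) ≠ 0 := Nat.cast_ne_zero.2 m.succ_ne_zero
    have hexp : -((m + 1 : ℕ) : ℤ) = -(m : ℤ) - 1 := by push_cast; ring
    calc ∫ x : ℝ, ((x : ℂ) + c) ^ (-((m + 1 : ℕ) : ℤ) - 1) * ψ x
        = ((m + 1 : ℕ) : ℂ)⁻¹ * ∫ x : ℝ, ((x : ℂ) + c) ^ (-(m : ℤ) - 1) * derivCLM ℝ ℂ ψ x := by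
          rw [← hexp]
          exact (eq_inv_mul_iff_mul_eq₀ hk).2 h.symm
      _ = _ := by
          rw [ih, Function.iterate_succ_apply, Nat.factorial_succ, Nat.cast_mul, mul_inv, mul_assoc]

theorem tendsto_integral_ofReal_add_mul_I_zpow_mul (φ : 𝓢(ℝ, ℂ)) {σ : ℝ} (hσ : σ ^ 2 = 1) (m : ℕ) :
    Tendsto (fun ε : ℝ => ∫ x : ℝ, ((x : ℂ) + σ * ε * I) ^ (-(m : ℤ) - 1) * φ x) (𝓝[>] 0)
      (𝓝 ((m.factorial : ℂ)⁻¹ * (((derivCLM ℝ ℂ)^[m] φ).pvInv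
        - σ * Real.pi * I * (derivCLM ℝ ℂ)^[m] φ 0))) := by
  refine ((((derivCLM ℝ ℂ)^[m] φ).tendsto_integral_inv_ofReal_add_mul_I_mul hσ).const_mul _).congr'
    (eventually_nhdsWithin_of_forall fun ε (hε : 0 < ε) => ?_)
  refine (φ.integral_ofReal_add_zpow_sub_one_mul ?_ m).symm
  simp [hε.ne', show σ ≠ 0 by rintro rfl; norm_num at hσ]

end SchwartzMap

/-- Sokhotski–Plemelj-type formula: as distributions,
`(x ± i0)^{-n} = p.v. x^{-n} ∓ iπ(-1)^{n-1}/(n-1)! δ^{(n-1)}`. The finite part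
`p.v. x^{-n}` is realized as `(1/(n-1)!) ⟨p.v. 1/x, φ^{(n-1)}⟩`, and the
pairing with `δ^{(n-1)}` contributes `∓ iπ/(n-1)! φ^{(n-1)}(0)`. -/
theorem stmt_14 (n : ℕ) (hn : 1 ≤ n) (φ : SchwartzMap ℝ ℂ) :
    ∃ L : ℂ,
      Tendsto (fun δ : ℝ =>
          (1 / ((Nat.factorial (n - 1) : ℝ) : ℂ)) *
            ∫ x in {x : ℝ | δ < |x|}, iteratedDeriv (n - 1) (fun y => φ y) x / (x : ℂ))
        (nhdsWithin 0 (Ioi 0)) (nhds L) ∧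
      Tendsto (fun ε : ℝ =>
          ∫ x : ℝ, ((x : ℂ) + (ε : ℂ) * Complex.I) ^ (-(n : ℤ)) * φ x)
        (nhdsWithin 0 (Ioi 0))
        (nhds (L - ((Real.pi : ℂ) * Complex.I / ((Nat.factorial (n - 1) : ℝ) : ℂ)) *
          iteratedDeriv (n - 1) (fun y => φ y) 0)) ∧
      Tendsto (fun ε : ℝ =>
          ∫ x : ℝ, ((x : ℂ) - (ε : ℂ) * Complex.I) ^ (-(n : ℤ)) * φ x)
        (nhdsWithin 0 (Ioi 0))
        (nhds (L + ((Real.pi : ℂ) * Complex.I / ((Nat.factorial (n - 1) : ℝ) : ℂ)) *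
          iteratedDeriv (n - 1) (fun y => φ y) 0)) := by
  obtain ⟨m, rfl⟩ : ∃ m, n = m + 1 := ⟨n - 1, by omega⟩
  have hψ : iteratedDeriv m (fun y => φ y) = (SchwartzMap.derivCLM ℝ ℂ)^[m] φ :=
    φ.iteratedDeriv_eq_iterate_derivCLM m
  have hexp : -((m + 1 : ℕ) : ℤ) = -(m : ℤ) - 1 := by push_cast; ring
  simp only [Nat.add_sub_cancel, hψ, ofReal_natCast, hexp]
  refine ⟨(m.factorial : ℂ)⁻¹ * ((SchwartzMap.derivCLM ℝ ℂ)^[m] φ).pvInv, ?_, ?_, ?_⟩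
  · simpa only [one_div] using
      ((SchwartzMap.derivCLM ℝ ℂ)^[m] φ).tendsto_setIntegral_lt_abs_div.const_mul _
  · convert φ.tendsto_integral_ofReal_add_mul_I_zpow_mul (σ := 1) (by norm_num) m using 3
    · simp
    · push_cast
      ring
  · convert φ.tendsto_integral_ofReal_add_mul_I_zpow_mul (σ := -1) (by norm_num) m using 3
    · simp [sub_eq_add_neg]
    · push_cast
      ring
end
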